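/- arXiv:1908.06940 — 2 statements merged into one kernel-verified Lean document; each statement's English description precedes it below -/
import Mathlib

section
/- Let n = k·s with integers k ≥ 2 and s ≥ 1, let z : {1,…,n} → {1,…,k} be a block assignment whose every fiber has exactly s elements, and let p, q be real numbers. Let M be the n×n real symmetric matrix with M_{ii} = 0 for all i, M_{ij} = p for i ≠ j with z(i) = z(j), and M_{ij} = q for z(i) ≠ z(j). Then the characteristic polynomial of M equals (X − (qn + (p−q)s − p)) · (X − ((p−q)s − p))^{k−1} · (X + p)^{n−k}; equivalently, the eigenvalues of M are qn + (p−q)s − p with multiplicity 1, (p−q)s − p with multiplicity k−1, and −p with multiplicity n−k. -/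
/-!
Writing `U` for the `n × k` community-membership matrix and `J` for the all-ones matrix,
`M + p I = U N Uᵀ` with `N = (p − q) I + q J`. Since `Uᵀ U = s I`, the identity
`X ^ k χ(U (N Uᵀ)) = X ^ n χ((N Uᵀ) U)` reduces `χ(M)` to the characteristic polynomial of the
`k × k` matrix `s N = s (p − q) I + s q J`, a scalar shift of the rank-one matrix `s q J`.
-/

open Polynomial Matrix Finset

variable {ι κ : Type*} (R : Type*) [DecidableEq κ] [CommRing R]

def assignmentMatrix (z : ι → κ) : Matrix ι κ R := of fun i a => if z i = a then 1 else 0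

variable {R}

theorem assignmentMatrix_mul_mul_transpose_apply [Fintype ι] [Fintype κ] (z : ι → κ)
    (N : Matrix κ κ R) (i j : ι) :
    (assignmentMatrix R z * N * (assignmentMatrix R z)ᵀ) i j = N (z i) (z j) := by
  simp [assignmentMatrix, mul_apply]

theorem transpose_assignmentMatrix_mul_self [Fintype ι] {z : ι → κ} {s : ℕ}
    (hz : ∀ a, #{i | z i = a} = s) :
    (assignmentMatrix R z)ᵀ * assignmentMatrix R z = s := by
  ext a b
  rw [mul_apply, Matrix.natCast_apply]
  simp only [assignmentMatrix, transpose_apply, of_apply, mul_ite, mul_one, mul_zero, ← ite_and,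
    sum_boole]
  split_ifs with hab
  · simp [hab, hz]
  · congr 1
    rw [card_eq_zero, filter_eq_empty_iff]
    rintro i - ⟨rfl, rfl⟩
    exact hab rfl

theorem charpoly_scalar_add_const [Fintype κ] [Nonempty κ] (a b : R) :
    (scalar κ a + of fun _ _ => b).charpoly =
      (X - C (a + Fintype.card κ * b)) * (X - C a) ^ (Fintype.card κ - 1) := by
  have hJ : (of fun _ _ => b : Matrix κ κ R) = vecMulVec (fun _ => b) 1 := by
    ext; simp [vecMulVec]
  have hshift := charpoly_sub_scalar (vecMulVec (fun _ : κ => b) 1) (-a)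
  rw [charpoly_vecMulVec, map_neg, sub_neg_eq_add, add_comm, ← hJ] at hshift
  obtain ⟨m, hm⟩ := Nat.exists_eq_add_one_of_ne_zero (Fintype.card_ne_zero (α := κ))
  rw [hshift, hm, Nat.add_sub_cancel, pow_succ]
  simp only [dotProduct, Pi.one_apply, mul_one, sum_const, card_univ, hm, nsmul_eq_mul,
    Nat.cast_add, Nat.cast_one, smul_eq_C_mul, map_mul, map_add, map_natCast, map_one, map_neg,
    sub_comp, mul_comp, pow_comp, X_comp, add_comp, natCast_comp, one_comp, C_comp]
  ring

/-- The expected adjacency matrix of the simplified CHIP model: zero diagonal,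
`p` within communities, `q` across communities, with `k` communities of equal
size `s` (so `n = k·s`).  Its characteristic polynomial is
`(X − (qn + (p−q)s − p)) · (X − ((p−q)s − p))^(k−1) · (X + p)^(n−k)`,
i.e. the eigenvalues are `qn + (p−q)s − p` (multiplicity 1),
`(p−q)s − p` (multiplicity `k−1`) and `−p` (multiplicity `n−k`). -/
theorem charpoly_expected_adjacency_zero_diag
    (n k s : ℕ) (hk : 2 ≤ k) (hs : 1 ≤ s) (hn : n = k * s)
    (z : Fin n → Fin k)
    (hz : ∀ a : Fin k, (Finset.univ.filter fun i => z i = a).card = s)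
    (p q : ℝ) (M : Matrix (Fin n) (Fin n) ℝ)
    (hM : ∀ i j, M i j =
      if i = j then 0 else if z i = z j then p else q) :
    M.charpoly =
      (X - C (q * (n : ℝ) + (p - q) * (s : ℝ) - p)) *
        (X - C ((p - q) * (s : ℝ) - p)) ^ (k - 1) *
        (X + C p) ^ (n - k) := by
  set U := assignmentMatrix ℝ z
  set N : Matrix (Fin k) (Fin k) ℝ := scalar (Fin k) (p - q) + of fun _ _ => q
  have hM_eq : M = U * N * Uᵀ - scalar (Fin n) p := by
    ext i j
    rw [Matrix.sub_apply, assignmentMatrix_mul_mul_transpose_apply, hM]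
    by_cases hij : i = j
    · simp [N, hij]
    · by_cases hzij : z i = z j <;> simp [N, hij, hzij]
  have hNs : N * (s : Matrix (Fin k) (Fin k) ℝ) =
      scalar (Fin k) (s * (p - q)) + of fun _ _ => s * q := by
    rw [← nsmul_eq_mul']
    ext a b
    by_cases hab : a = b <;> simp [N, hab]
    ring
  have hkn : Fintype.card (Fin k) ≤ Fintype.card (Fin n) := by
    simpa [hn] using Nat.le_mul_of_pos_right k hs
  have : NeZero k := ⟨by omega⟩
  rw [hM_eq, charpoly_sub_scalar, Matrix.mul_assoc, charpoly_mul_comm_of_le _ _ hkn,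
    Matrix.mul_assoc, transpose_assignmentMatrix_mul_self hz, hNs, charpoly_scalar_add_const]
  simp only [Fintype.card_fin, mul_comp, pow_comp, sub_comp, X_comp, C_comp]
  simp only [hn, Nat.cast_mul, map_add, map_sub, map_mul, map_natCast]
  ring
end

section
/- Let Z be an n×k real matrix each of whose rows is a standard basis vector of ℝ^k, and suppose each column a of Z has exactly n_a ≥ 1 ones. Let B be a k×k symmetric invertible real matrix and set P = Z B Zᵀ. Then P has rank k, and for any n×k real matrix U with orthonormal columns whose column space equals the column space of P, there exists a k×k real matrix Q with U = Z Q, and the rows of Q satisfy ‖Q_{a·} − Q_{b·}‖₂ = √(1/n_a + 1/n_b) for all a ≠ b. -/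
open Matrix

/-!
Since the rows of `Z` are standard basis vectors, `Zᵀ Z = D := diag (n_a)` is invertible, so
`Zᵀ P Z = D B D` is invertible and `P` has rank `k`. The columns of `U` lie in
`range P ⊆ range Z`, whence `U = Z Q`, and `Uᵀ U = 1` reads `Qᵀ D Q = 1`. For a square `Q`
this forces `Q Qᵀ = D⁻¹`: the rows of `Q` are orthogonal with squared norms `1 / n_a`, so
`‖Q_a − Q_b‖² = 1 / n_a + 1 / n_b`.
-/

namespace Matrix

variable {m ι p R : Type*}

def IsMembershipMatrix [DecidableEq ι] [Zero R] [One R] (Z : Matrix m ι R) : Prop :=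
  ∀ i, ∃ a, ∀ b, Z i b = if b = a then 1 else 0

theorem IsMembershipMatrix.transpose_mul_self [Fintype m] [DecidableEq ι] [Semiring R]
    [DecidableEq R] {Z : Matrix m ι R} (hZ : Z.IsMembershipMatrix) :
    Zᵀ * Z = diagonal fun a => ((Finset.univ.filter fun i => Z i a = 1).card : R) := by
  have hentry : ∀ i a b, Z i a * Z i b = if a = b then (if Z i a = 1 then 1 else 0) else 0 := by
    intro i a b
    obtain ⟨c, hc⟩ := hZ i
    simp only [hc]
    split_ifs <;> simp_all
  ext a b
  simp only [mul_apply, transpose_apply, hentry, diagonal_apply]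
  split_ifs <;> simp [Finset.sum_boole]

theorem rank_mul_mul_transpose [Fintype m] [Fintype ι] [DecidableEq ι] [Field R]
    {Z : Matrix m ι R} {B : Matrix ι ι R} (hZ : IsUnit (Zᵀ * Z)) (hB : IsUnit B) :
    (Z * B * Zᵀ).rank = Fintype.card ι := by
  refine le_antisymm ((rank_mul_le_left _ _).trans <| (rank_mul_le_left _ _).trans <|
    rank_le_card_width Z) ?_
  have hgram : Zᵀ * (Z * B * Zᵀ * Z) = (Zᵀ * Z) * B * (Zᵀ * Z) := by
    simp only [Matrix.mul_assoc]
  calc Fintype.card ι = (Zᵀ * (Z * B * Zᵀ * Z)).rank := by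
        rw [hgram, rank_of_isUnit _ ((hZ.mul hB).mul hZ)]
    _ ≤ (Z * B * Zᵀ * Z).rank := rank_mul_le_right _ _
    _ ≤ (Z * B * Zᵀ).rank := rank_mul_le_left _ _

theorem exists_eq_mul_of_range_toLin'_le [Fintype ι] [DecidableEq ι] [Fintype p] [DecidableEq p]
    [CommSemiring R] {Z : Matrix m ι R} {U : Matrix m p R}
    (h : LinearMap.range (toLin' U) ≤ LinearMap.range (toLin' Z)) :
    ∃ Q : Matrix ι p R, U = Z * Q := by
  have hcol : ∀ j, ∃ x, Z *ᵥ x = U.col j := fun j => by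
    obtain ⟨x, hx⟩ := h ⟨Pi.single j 1, rfl⟩
    exact ⟨x, by simpa using hx⟩
  choose x hx using hcol
  refine ⟨of fun a j => x j a, ?_⟩
  ext i j
  rw [← col_apply U, ← hx j]
  simp [mul_apply, mulVec, dotProduct]

theorem mul_transpose_mul_gram_eq_one [Fintype m] [Fintype ι] [DecidableEq ι] [CommRing R]
    {Z : Matrix m ι R} {Q : Matrix ι ι R} (hU : (Z * Q)ᵀ * (Z * Q) = 1) :
    Q * Qᵀ * (Zᵀ * Z) = 1 := by
  have hQ : Qᵀ * (Zᵀ * Z) * Q = 1 := by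
    rw [← hU, transpose_mul]
    simp only [Matrix.mul_assoc]
  rw [Matrix.mul_assoc]
  exact mul_eq_one_comm.mp hQ

theorem sum_sub_sq_eq [Fintype p] [CommRing R] (Q : Matrix ι p R) (a b : ι) :
    ∑ c, (Q a c - Q b c) ^ 2 = (Q * Qᵀ) a a + (Q * Qᵀ) b b - 2 * (Q * Qᵀ) a b := by
  simp only [mul_apply, transpose_apply, Finset.mul_sum, ← Finset.sum_add_distrib,
    ← Finset.sum_sub_distrib]
  exact Finset.sum_congr rfl fun c _ => by ring

end Matrix

theorem spectral_embedding_membership_structure_general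
    (n k : ℕ) (Z : Matrix (Fin n) (Fin k) ℝ)
    (hrow : ∀ i, ∃ a, ∀ b, Z i b = if b = a then 1 else 0)
    (nsize : Fin k → ℕ) (hsize : ∀ a, 1 ≤ nsize a)
    (hcol : ∀ a, (Finset.univ.filter fun i => Z i a = 1).card = nsize a)
    (B : Matrix (Fin k) (Fin k) ℝ) (hBinv : IsUnit B)
    (P : Matrix (Fin n) (Fin n) ℝ) (hP : P = Z * B * Zᵀ) :
    P.rank = k ∧
      ∀ U : Matrix (Fin n) (Fin k) ℝ, Uᵀ * U = 1 →
        LinearMap.range (Matrix.toLin' U) = LinearMap.range (Matrix.toLin' P) →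
        ∃ Q : Matrix (Fin k) (Fin k) ℝ, U = Z * Q ∧
          ∀ a b, a ≠ b →
            Real.sqrt (∑ c, (Q a c - Q b c) ^ 2) =
              Real.sqrt (1 / (nsize a : ℝ) + 1 / (nsize b : ℝ)) := by
  have hsize_ne : ∀ a, (nsize a : ℝ) ≠ 0 := fun a => Nat.cast_ne_zero.mpr (by grind)
  have hgram : Zᵀ * Z = diagonal fun a => (nsize a : ℝ) := by
    simp only [IsMembershipMatrix.transpose_mul_self hrow, hcol]
  have hgram_unit : IsUnit (Zᵀ * Z) := by
    rw [hgram, isUnit_diagonal]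
    exact Pi.isUnit_iff.mpr fun a => (hsize_ne a).isUnit
  refine ⟨by rw [hP, rank_mul_mul_transpose hgram_unit hBinv, Fintype.card_fin],
    fun U hU hrange => ?_⟩
  have hrange_le : LinearMap.range (toLin' U) ≤ LinearMap.range (toLin' Z) := by
    rw [hrange, hP, Matrix.mul_assoc, toLin'_mul]
    exact LinearMap.range_comp_le_range _ _
  obtain ⟨Q, rfl⟩ := exists_eq_mul_of_range_toLin'_le hrange_le
  have hQQt : Q * Qᵀ = diagonal fun a => (nsize a : ℝ)⁻¹ := by
    have hdiag_inv :
        (diagonal fun a => (nsize a : ℝ)) * diagonal (fun a => (nsize a : ℝ)⁻¹) = 1 := by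
      simp [diagonal_mul_diagonal, hsize_ne]
    rw [← Matrix.one_mul (diagonal _), ← mul_transpose_mul_gram_eq_one hU, Matrix.mul_assoc,
      hgram, hdiag_inv, Matrix.mul_one]
  refine ⟨Q, rfl, fun a b hab => ?_⟩
  rw [sum_sub_sq_eq, hQQt]
  simp [hab]

/-- Eigenvector-structure lemma for block matrices.  If `Z` is an `n × k`
membership matrix (each row a standard basis vector, each column `a` having
exactly `nsize a ≥ 1` ones), `B` is a `k × k` symmetric invertible matrix and
`P = Z B Zᵀ`, then `P` has rank `k`, and any `n × k` matrix `U` with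
orthonormal columns spanning the column space of `P` can be written `U = Z Q`
where the rows of `Q` satisfy `‖Q_{a·} − Q_{b·}‖₂ = √(1/n_a + 1/n_b)` for
`a ≠ b`. -/
theorem spectral_embedding_membership_structure
    (n k : ℕ) (Z : Matrix (Fin n) (Fin k) ℝ)
    (hrow : ∀ i, ∃ a, ∀ b, Z i b = if b = a then 1 else 0)
    (nsize : Fin k → ℕ) (hsize : ∀ a, 1 ≤ nsize a)
    (hcol : ∀ a, (Finset.univ.filter fun i => Z i a = 1).card = nsize a)
    (B : Matrix (Fin k) (Fin k) ℝ) (hB : B.IsSymm) (hBinv : IsUnit B)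
    (P : Matrix (Fin n) (Fin n) ℝ) (hP : P = Z * B * Zᵀ) :
    P.rank = k ∧
      ∀ U : Matrix (Fin n) (Fin k) ℝ, Uᵀ * U = 1 →
        LinearMap.range (Matrix.toLin' U) = LinearMap.range (Matrix.toLin' P) →
        ∃ Q : Matrix (Fin k) (Fin k) ℝ, U = Z * Q ∧
          ∀ a b, a ≠ b →
            Real.sqrt (∑ c, (Q a c - Q b c) ^ 2) =
              Real.sqrt (1 / (nsize a : ℝ) + 1 / (nsize b : ℝ)) :=
  spectral_embedding_membership_structure_general n k Z hrow nsize hsize hcol B hBinv P hP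
end
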